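/- (Expansion of the ETKF transformation.) Let B ∈ ℝ^{M×M} be symmetric positive semidefinite. Then ((Id_M + B)⁻¹)^{1/2} = Id_M − (1/2) B + (1/√π) ∫₀^∞ t^{−1/2} e^{−t} ( exp(−tB) − Id_M + tB ) dt, where ((Id_M + B)⁻¹)^{1/2} is the positive semidefinite square root of (Id_M + B)⁻¹ and the integral is a convergent Bochner integral. -/

import Mathlib

/-!
Diagonalise `B = U diag(λ) Uᵀ`. The matrix exponential, the Bochner integral and the positive
semidefinite square root (by uniqueness) all pass through the algebra homomorphism
`v ↦ U diag(v) Uᵀ`, so the identity reduces to its scalar version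
`(1 + λ)^{-1/2} = 1 - λ/2 + π^{-1/2} ∫₀^∞ t^{-1/2} e^{-t} (e^{-tλ} - 1 + tλ) dt` for each
eigenvalue `λ`. Splitting the integrand, this is a combination of the Gamma integrals
`∫₀^∞ t^{a-1} e^{-rt} dt = r^{-a} Γ(a)` with `(a, r) = (1/2, 1 + λ), (1/2, 1), (3/2, 1)`.
-/

open Matrix MeasureTheory
open scoped Matrix.Norms.L2Operator NNReal RealInnerProductSpace

/-- The positive semidefinite square root of a positive semidefinite matrix (the definition
`Matrix.PosSemidef.sqrt` of the older Mathlib, since removed). -/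
noncomputable def Matrix.PosSemidef.sqrt {n : Type*} [Fintype n] {𝕜 : Type*} [RCLike 𝕜]
    [PartialOrder 𝕜] [StarOrderedRing 𝕜] [DecidableEq n] {A : Matrix n n 𝕜} (hA : A.PosSemidef) : Matrix n n 𝕜 :=
  hA.1.eigenvectorUnitary.1 * diagonal ((↑) ∘ (√·) ∘ hA.1.eigenvalues) *
  (star hA.1.eigenvectorUnitary : Matrix n n 𝕜)

/-- The ensemble mean `x̄ = (1/M) ∑ᵢ X⁽ⁱ⁾`. -/
noncomputable def ensMean {d M : ℕ} (X : Fin M → EuclideanSpace ℝ (Fin d)) :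
    EuclideanSpace ℝ (Fin d) :=
  (M : ℝ)⁻¹ • ∑ i, X i

/-- The matrix of ensemble deviations, with columns `X⁽ⁱ⁾ − x̄`. -/
noncomputable def devMat {d M : ℕ} (X : Fin M → EuclideanSpace ℝ (Fin d)) :
    Matrix (Fin d) (Fin M) ℝ :=
  Matrix.of fun j i => (X i - ensMean X) j

/-- The trace of the empirical covariance matrix,
`tr(P) = (1/(M−1)) ∑ᵢ ‖X⁽ⁱ⁾ − x̄‖²`. -/
noncomputable def trP {d M : ℕ} (X : Fin M → EuclideanSpace ℝ (Fin d)) : ℝ :=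
  ((M : ℝ) - 1)⁻¹ * ∑ i, ‖X i - ensMean X‖ ^ 2

open Set Real

lemma Real.integrableOn_rpow_mul_exp_neg_mul_Ioi {a r : ℝ} (ha : 0 < a) (hr : 0 < r) :
    IntegrableOn (fun t : ℝ => t ^ (a - 1) * rexp (-(r * t))) (Ioi 0) := by
  simpa [neg_mul] using integrableOn_rpow_mul_exp_neg_mul_rpow (p := 1) (by linarith) one_pos hr

lemma Real.Gamma_three_halves : Gamma (3 / 2) = √π / 2 := by
  rw [show (3 / 2 : ℝ) = 1 / 2 + 1 by norm_num, Gamma_add_one (by norm_num), Gamma_one_half_eq]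
  ring

noncomputable def etkfKernel (x t : ℝ) : ℝ :=
  (√t)⁻¹ * rexp (-t) * (rexp (-(t * x)) - 1 + t * x)

lemma etkfKernel_eqOn_Ioi (x : ℝ) : EqOn (etkfKernel x)
    (fun t => t ^ ((1 / 2 : ℝ) - 1) * rexp (-((1 + x) * t))
      - t ^ ((1 / 2 : ℝ) - 1) * rexp (-(1 * t))
      + x * (t ^ ((3 / 2 : ℝ) - 1) * rexp (-(1 * t)))) (Ioi 0) := by
  intro t (ht : 0 < t)
  have h_inv_sqrt : (√t)⁻¹ = t ^ ((1 / 2 : ℝ) - 1) := by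
    rw [sqrt_eq_rpow, ← rpow_neg ht.le]
    norm_num
  have h_sqrt : t ^ ((3 / 2 : ℝ) - 1) = t * t ^ ((1 / 2 : ℝ) - 1) := by
    rw [← rpow_one_add' ht.le (by norm_num)]
    norm_num
  have h_exp : rexp (-((1 + x) * t)) = rexp (-t) * rexp (-(t * x)) := by
    rw [← exp_add]
    ring_nf
  simp only [etkfKernel, h_inv_sqrt, h_sqrt, h_exp]
  ring_nf

lemma integrableOn_etkfKernel {x : ℝ} (hx : -1 < x) : IntegrableOn (etkfKernel x) (Ioi 0) :=
  (((integrableOn_rpow_mul_exp_neg_mul_Ioi (by norm_num) (by linarith)).sub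
    (integrableOn_rpow_mul_exp_neg_mul_Ioi (by norm_num) one_pos)).add
    ((integrableOn_rpow_mul_exp_neg_mul_Ioi (by norm_num) one_pos).const_mul x)).congr_fun
    (etkfKernel_eqOn_Ioi x).symm measurableSet_Ioi

lemma integral_etkfKernel {x : ℝ} (hx : -1 < x) :
    ∫ t in Ioi 0, etkfKernel x t = √π * ((√(1 + x))⁻¹ - 1 + x / 2) := by
  have h₁ := integrableOn_rpow_mul_exp_neg_mul_Ioi (a := 1 / 2) (by norm_num)
    (show 0 < 1 + x by linarith)
  have h₂ := integrableOn_rpow_mul_exp_neg_mul_Ioi (a := 1 / 2) (by norm_num) one_pos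
  have h₃ := (integrableOn_rpow_mul_exp_neg_mul_Ioi (a := 3 / 2) (by norm_num) one_pos).const_mul x
  rw [setIntegral_congr_fun measurableSet_Ioi (etkfKernel_eqOn_Ioi x),
    integral_add (by exact h₁.sub h₂) h₃, integral_sub h₁ h₂, integral_const_mul,
    integral_rpow_mul_exp_neg_mul_Ioi (by norm_num) (by linarith),
    integral_rpow_mul_exp_neg_mul_Ioi (by norm_num) one_pos,
    integral_rpow_mul_exp_neg_mul_Ioi (by norm_num) one_pos, Gamma_three_halves,
    Gamma_one_half_eq, ← sqrt_eq_rpow, one_div, sqrt_inv]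
  norm_num
  ring

namespace Matrix.IsHermitian

variable {n : Type*} [Fintype n] [DecidableEq n] {A : Matrix n n ℝ} (hA : A.IsHermitian)

noncomputable def eigenAlgHom : (n → ℝ) →ₐ[ℝ] Matrix n n ℝ :=
  (Unitary.conjStarAlgAut ℝ _ hA.eigenvectorUnitary : Matrix n n ℝ →ₐ[ℝ] Matrix n n ℝ).comp
    (diagonalAlgHom ℝ)

lemma eigenAlgHom_apply (v : n → ℝ) :
    hA.eigenAlgHom v =
      hA.eigenvectorUnitary * diagonal v * star (hA.eigenvectorUnitary : Matrix n n ℝ) :=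
  rfl

lemma eigenAlgHom_eigenvalues : hA.eigenAlgHom hA.eigenvalues = A := by
  conv_rhs => rw [hA.spectral_theorem]
  rfl

lemma exp_eigenAlgHom (v : n → ℝ) :
    NormedSpace.exp (hA.eigenAlgHom v) = hA.eigenAlgHom (fun i => rexp (v i)) := by
  set U : Matrix n n ℝ := (hA.eigenvectorUnitary : Matrix n n ℝ)
  have hU : IsUnit U := ⟨Unitary.toUnits hA.eigenvectorUnitary, rfl⟩
  have hU_inv : U⁻¹ = star U :=
    inv_eq_right_inv (Unitary.mul_star_self_of_mem hA.eigenvectorUnitary.2)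
  rw [eigenAlgHom_apply, eigenAlgHom_apply, ← hU_inv, exp_conj _ _ hU, exp_diagonal]
  congr
  funext i
  rw [Pi.coe_exp, exp_eq_exp_ℝ]

lemma eigenAlgHom_inv {v : n → ℝ} (hv : ∀ i, v i ≠ 0) :
    hA.eigenAlgHom v⁻¹ = (hA.eigenAlgHom v)⁻¹ := by
  refine (inv_eq_left_inv ?_).symm
  rw [← map_mul, ← map_one hA.eigenAlgHom]
  congr 1
  funext i
  simp [hv i]

lemma posSemidef_eigenAlgHom {v : n → ℝ} (hv : 0 ≤ v) : (hA.eigenAlgHom v).PosSemidef := by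
  rw [eigenAlgHom_apply, star_eq_conjTranspose]
  exact (posSemidef_diagonal_iff.mpr hv).mul_mul_conjTranspose_same _

variable {X : Type*} [MeasurableSpace X] {μ : Measure X} {s : Set X} {f : X → n → ℝ}

lemma integrableOn_eigenAlgHom (hf : IntegrableOn f s μ) :
    IntegrableOn (fun x => hA.eigenAlgHom (f x)) s μ :=
  hA.eigenAlgHom.toLinearMap.toContinuousLinearMap.integrable_comp hf

lemma setIntegral_eigenAlgHom (hf : IntegrableOn f s μ) :
    ∫ x in s, hA.eigenAlgHom (f x) ∂μ = hA.eigenAlgHom (∫ x in s, f x ∂μ) :=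
  hA.eigenAlgHom.toLinearMap.toContinuousLinearMap.integral_comp_comm hf

end Matrix.IsHermitian

open scoped MatrixOrder in
lemma Matrix.PosSemidef.sqrt_eq_of_sq_eq {n : Type*} [Fintype n] [DecidableEq n]
    {A C : Matrix n n ℝ} (hA : A.PosSemidef) (hC : C.PosSemidef) (h : C ^ 2 = A) :
    hA.sqrt = C := by
  have h_cfc : hA.sqrt = CFC.sqrt A := by
    rw [CFC.sqrt_eq_cfc, cfc_nnreal_eq_real _ A hA.nonneg, hA.1.cfc_eq]
    simp [IsHermitian.cfc, PosSemidef.sqrt, Function.comp_def, hA.eigenvalues_nonneg]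
  rw [h_cfc]
  exact CFC.sqrt_unique (by rw [← sq, h]) hC.nonneg

/-- expansion of the ETKF transformation: for `B` symmetric positive
semidefinite, `((Id + B)⁻¹)^{1/2} = Id − (1/2)B + (1/√π) ∫₀^∞ t^{−1/2} e^{−t}
(exp(−tB) − Id + tB) dt`, the integral being a convergent Bochner integral. -/
theorem etkf_transformation_expansion {M : ℕ} (B : Matrix (Fin M) (Fin M) ℝ)
    (hB : B.PosSemidef)
    (h1 : (((1 : Matrix (Fin M) (Fin M) ℝ) + B)⁻¹).PosSemidef) :
    IntegrableOn
      (fun t : ℝ => ((Real.sqrt t)⁻¹ * Real.exp (-t)) •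
        (NormedSpace.exp (-(t • B)) - 1 + t • B)) (Set.Ioi 0) volume ∧
    h1.sqrt = 1 - (2 : ℝ)⁻¹ • B + (Real.sqrt Real.pi)⁻¹ •
      ∫ t in Set.Ioi (0 : ℝ),
        ((Real.sqrt t)⁻¹ * Real.exp (-t)) • (NormedSpace.exp (-(t • B)) - 1 + t • B) := by
  set L := hB.1.eigenAlgHom
  set ev := hB.1.eigenvalues
  have hB_spectral : B = L ev := hB.1.eigenAlgHom_eigenvalues.symm
  have hev : ∀ i, -1 < ev i := fun i => by linarith [hB.eigenvalues_nonneg i]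
  have h_integrand (t : ℝ) : ((√t)⁻¹ * rexp (-t)) • (NormedSpace.exp (-(t • B)) - 1 + t • B) =
      L (fun i => etkfKernel (ev i) t) := by
    rw [hB_spectral, ← map_smul, ← map_neg, IsHermitian.exp_eigenAlgHom, ← map_one L, ← map_sub,
      ← map_add, ← map_smul]
    rfl
  have h_int : IntegrableOn (fun t i => etkfKernel (ev i) t) (Ioi 0) :=
    integrable_pi_iff.2 fun i => integrableOn_etkfKernel (hev i)
  have h_integral : ∫ t in Ioi 0, L (fun i => etkfKernel (ev i) t) =
      L (fun i => √π * ((√(1 + ev i))⁻¹ - 1 + ev i / 2)) := by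
    rw [hB.1.setIntegral_eigenAlgHom h_int]
    congr 1
    funext i
    rw [eval_integral (fun i => integrableOn_etkfKernel (hev i)), integral_etkfKernel (hev i)]
  have h_sqrt : h1.sqrt = L (fun i => (√(1 + ev i))⁻¹) := by
    refine h1.sqrt_eq_of_sq_eq (hB.1.posSemidef_eigenAlgHom fun i => by positivity) ?_
    have h_ne : ∀ i, (1 + ev) i ≠ 0 := fun i => by
      simp only [Pi.add_apply, Pi.one_apply]
      linarith [hev i]
    rw [← map_pow, hB_spectral, ← map_one L, ← map_add, ← IsHermitian.eigenAlgHom_inv _ h_ne]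
    congr 1
    funext i
    simp only [Pi.pow_apply, Pi.inv_apply, Pi.add_apply, Pi.one_apply, inv_pow,
      sq_sqrt (show 0 ≤ 1 + ev i by linarith [hev i])]
  simp_rw [h_integrand]
  refine ⟨hB.1.integrableOn_eigenAlgHom h_int, ?_⟩
  rw [h_integral, h_sqrt, hB_spectral, ← map_one L, ← map_smul, ← map_sub, ← map_smul, ← map_add]
  congr 1
  funext i
  have hπ : √π ≠ 0 := by positivity
  simp only [Pi.add_apply, Pi.sub_apply, Pi.smul_apply, Pi.one_apply, smul_eq_mul]
  field_simp
  ring
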